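/- arXiv:1702.03194 — 3 statements merged into one kernel-verified Lean document; each statement's English description precedes it below -/
import Mathlib

section
/- Let r = [r_0, ..., r_m] and c = [c_0, ..., c_n] be strictly increasing sequences of natural numbers. Then the rank of the matrix T_{r,c} with (i,j) entry C(c_j, r_i) equals the maximal length of an ordered sub-pair for {r, c} (and equals 0 if no ordered sub-pair exists). -/
/-- The submatrix of the Pascal upper-triangular matrix with rows
`r 0, …, r m` and columns `c 0, …, c n`: its `(i,j)` entry is the binomial
coefficient `C(c j, r i)` (which is `0` when `r i > c j`). -/
def pascalSub (r c : ℕ → ℕ) (m n : ℕ) : Matrix (Fin (m + 1)) (Fin (n + 1)) ℚ :=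
  Matrix.of fun i j => ((c (j : ℕ)).choose (r (i : ℕ)) : ℚ)

/-- `{r ∘ α, c ∘ β}` (restricted to indices `0, …, p`) is an ordered sub-pair of
length `p + 1` for the pair of finite sequences `[r 0, …, r m]`, `[c 0, …, c n]`:
`α` and `β` are strictly increasing selections of indices (so `r ∘ α` is a
subsequence of `[r 0, …, r m]` and `c ∘ β` is a subsequence of `[c 0, …, c n]`)
and `r (α i) ≤ c (β i)` for all `i = 0, …, p`. -/
def OrderedSubPair (r c : ℕ → ℕ) (m n p : ℕ) (α β : ℕ → ℕ) : Prop :=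
  StrictMonoOn α (Set.Iic p) ∧ StrictMonoOn β (Set.Iic p) ∧
    α p ≤ m ∧ β p ≤ n ∧ ∀ i ≤ p, r (α i) ≤ c (β i)

/-!
For increasing `r` and `c` the square determinant `det (C(c j, r i))` is nonnegative, and
positive exactly when `r ≤ c`. If `c i₀ < r i₀`, every Leibniz term contains a factor
`C(c j, r (σ j))` with `j ≤ i₀ ≤ σ j`, which vanishes. Otherwise split every row by Pascal's rule
`C(c, r) = C(c - 1, r) + C(c - 1, r - 1)`: the determinant becomes a sum of binomial determinants
with columns `c - 1`, each of which has two equal rows or is nonnegative by induction, and the term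
lowering exactly the rows with `r i = c i` is positive. As the rank of a matrix is the largest
size of an invertible square submatrix, whose rows and columns may be listed in increasing order,
the rank of `T_{r,c}` is the largest length of an ordered sub-pair.
-/

open Matrix Finset

def binomialMatrix {m n : Type*} (r : m → ℕ) (c : n → ℕ) : Matrix m n ℚ :=
  of fun i j => ((c j).choose (r i) : ℚ)

theorem Nat.choose_eq_sum_choose_pred {a b : ℕ} (ha : 0 < a) :
    a.choose b = ∑ t ∈ (range 2).filter (· ≤ b), (a - 1).choose (b - t) := by
  obtain ⟨a, rfl⟩ := Nat.exists_eq_add_one_of_ne_zero ha.ne'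
  rcases b with _ | b
  · simp
  · rw [filter_true_of_mem fun t ht => by simp at ht; omega]
    simp [sum_range_succ, Nat.choose_succ_succ', add_comm]

theorem Equiv.Perm.exists_le_le_apply {k : ℕ} (σ : Equiv.Perm (Fin k)) (a : Fin k) :
    ∃ j ≤ a, a ≤ σ j := by
  by_contra! h
  have hmaps : Set.MapsTo σ (Iic a) (Iio a) := fun j hj => by
    simpa using h j (by simpa using hj)
  have := card_le_card_of_injOn σ hmaps σ.injective.injOn
  simp at this

theorem StrictMono.monotone_sub_of_le_one {ι : Type*} [PartialOrder ι] {r t : ι → ℕ}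
    (hr : StrictMono r) (ht : ∀ i, t i ≤ 1) : Monotone fun i => r i - t i := by
  intro i j hij
  rcases hij.lt_or_eq with hlt | rfl
  · have : r i < r j := hr hlt
    have : t j ≤ 1 := ht j
    dsimp only
    omega
  · exact le_rfl

theorem StrictMono.sub_ite_eq {ι : Type*} [Preorder ι] {r c : ι → ℕ} (hr : StrictMono r)
    (hc : StrictMono c) (hc₀ : ∀ i, 0 < c i) (hrc : r ≤ c) :
    StrictMono fun i => r i - if r i = c i then 1 else 0 := by
  intro i j hij
  have : 0 < c i := hc₀ i
  have : r i < r j := hr hij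
  have : c i < c j := hc hij
  have : r i ≤ c i := hrc i
  have : r j ≤ c j := hrc j
  dsimp only
  split_ifs <;> omega

namespace binomialMatrix

variable {k : ℕ} {r c : Fin k → ℕ}

theorem det_eq_zero_of_lt (hr : Monotone r) (hc : Monotone c) {i₀ : Fin k} (h : c i₀ < r i₀) :
    (binomialMatrix r c).det = 0 := by
  rw [det_apply]
  refine sum_eq_zero fun σ _ => ?_
  obtain ⟨j, hj, hσj⟩ := σ.exists_le_le_apply i₀
  rw [prod_eq_zero (mem_univ j), smul_zero]
  simp only [binomialMatrix, of_apply, Nat.cast_eq_zero]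
  exact Nat.choose_eq_zero_of_lt ((hc hj).trans_lt (h.trans_le (hr hσj)))

theorem det_eq_zero_of_not_injective (hr : ¬Function.Injective r) :
    (binomialMatrix r c).det = 0 := by
  obtain ⟨i, j, hij, hne⟩ := Function.not_injective_iff.mp hr
  exact det_zero_of_row_eq hne (by ext; simp [binomialMatrix, hij])

theorem det_succ_of_head_eq {r c : Fin (k + 1) → ℕ} (hr : StrictMono r) (h : r 0 = c 0) :
    (binomialMatrix r c).det = (binomialMatrix (Fin.tail r) (Fin.tail c)).det := by
  rw [det_succ_column_zero, sum_eq_single 0]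
  · simp [binomialMatrix, h, Fin.tail, submatrix]
  · intro i _ hi
    have : c 0 < r i := h ▸ hr (Fin.pos_iff_ne_zero.mpr hi)
    simp [binomialMatrix, Nat.choose_eq_zero_of_lt this]
  · simp

theorem det_eq_sum_det_pred (hc : ∀ j, 0 < c j) :
    (binomialMatrix r c).det = ∑ t ∈ Fintype.piFinset fun i => (range 2).filter (· ≤ r i),
      (binomialMatrix (fun i => r i - t i) (fun j => c j - 1)).det := by
  have hrows : binomialMatrix r c = fun i => ∑ t ∈ (range 2).filter (· ≤ r i),
      fun j => ((c j - 1).choose (r i - t) : ℚ) := by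
    ext i j
    simp [binomialMatrix, Finset.sum_apply, Nat.choose_eq_sum_choose_pred (hc j)]
  rw [hrows]
  exact (detRowAlternating : (Fin k → ℚ) [⋀^Fin k]→ₗ[ℚ] ℚ).map_sum_finset _ _

theorem det_nonneg_and_pos_of_pred (hr : StrictMono r) (hc : StrictMono c) (hc₀ : ∀ j, 0 < c j)
    (ih : ∀ r' : Fin k → ℕ, StrictMono r' →
      0 ≤ (binomialMatrix r' fun j => c j - 1).det ∧
        ((r' ≤ fun j => c j - 1) → 0 < (binomialMatrix r' fun j => c j - 1).det)) :
    0 ≤ (binomialMatrix r c).det ∧ (r ≤ c → 0 < (binomialMatrix r c).det) := by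
  have hterm : ∀ t ∈ Fintype.piFinset fun i => (range 2).filter (· ≤ r i),
      0 ≤ (binomialMatrix (fun i => r i - t i) (fun j => c j - 1)).det := by
    intro t ht
    simp only [Fintype.mem_piFinset, mem_filter, mem_range] at ht
    by_cases hinj : Function.Injective fun i => r i - t i
    · have hmono := hr.monotone_sub_of_le_one (t := t) fun i => by have := (ht i).1; omega
      exact (ih _ (hmono.strictMono_of_injective hinj)).1
    · rw [det_eq_zero_of_not_injective hinj]
  rw [det_eq_sum_det_pred hc₀]
  refine ⟨sum_nonneg hterm, fun hrc => sum_pos' hterm ⟨fun i => if r i = c i then 1 else 0,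
    ?_, (ih _ (hr.sub_ite_eq hc hc₀ hrc)).2 fun i => ?_⟩⟩
  · simp only [Fintype.mem_piFinset, mem_filter, mem_range]
    intro i
    have := hc₀ i
    split_ifs <;> omega
  · have : r i ≤ c i := hrc i
    dsimp only
    split_ifs <;> omega

theorem det_nonneg_and_pos : ∀ {k : ℕ} {r c : Fin k → ℕ}, StrictMono r → StrictMono c →
    0 ≤ (binomialMatrix r c).det ∧ (r ≤ c → 0 < (binomialMatrix r c).det) := by
  intro k
  induction k with
  | zero => simp
  | succ k ih =>
    suffices ∀ N (r c : Fin (k + 1) → ℕ), c 0 = N → StrictMono r → StrictMono c →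
        0 ≤ (binomialMatrix r c).det ∧ (r ≤ c → 0 < (binomialMatrix r c).det) from
      fun {r c} hr hc => this _ r c rfl hr hc
    intro N
    induction N using Nat.strong_induction_on with | _ N ihN => ?_
    intro r c hN hr hc
    rcases Nat.eq_zero_or_pos N with rfl | hNpos
    · by_cases hr0 : r 0 = 0
      · rw [det_succ_of_head_eq hr (hr0.trans hN.symm)]
        obtain ⟨hnonneg, hpos⟩ := ih (hr.comp Fin.strictMono_succ) (hc.comp Fin.strictMono_succ)
        exact ⟨hnonneg, fun hrc => hpos fun i => hrc i.succ⟩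
      · have hlt : c 0 < r 0 := by rw [hN]; exact Nat.pos_of_ne_zero hr0
        rw [det_eq_zero_of_lt hr.monotone hc.monotone hlt]
        exact ⟨le_rfl, fun hrc => absurd (hrc 0) hlt.not_ge⟩
    have hc₀ : ∀ j, 0 < c j := fun j => hNpos.trans_le (hN ▸ hc.monotone (Fin.zero_le j))
    have hc' : StrictMono fun j => c j - 1 := fun i j hij => by
      have := hc hij; have := hc₀ i; dsimp only; omega
    exact det_nonneg_and_pos_of_pred hr hc hc₀ fun r' hr' =>
      ihN (N - 1) (by omega) r' _ (by simp [hN]) hr' hc'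

theorem det_ne_zero_iff (hr : StrictMono r) (hc : StrictMono c) :
    (binomialMatrix r c).det ≠ 0 ↔ r ≤ c := by
  refine ⟨fun h => ?_, fun hrc => ((det_nonneg_and_pos hr hc).2 hrc).ne'⟩
  by_contra hrc
  obtain ⟨i, hi⟩ := not_forall.mp hrc
  exact h (det_eq_zero_of_lt hr.monotone hc.monotone (not_le.mp hi))

end binomialMatrix

namespace Matrix

variable {K : Type*} [Field K]

theorem card_le_rank_of_isUnit_submatrix {m n ι : Type*} [Fintype n] [Fintype ι] [DecidableEq ι]
    (M : Matrix m n K) {f : ι → m} {g : ι → n} (h : IsUnit (M.submatrix f g)) :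
    Fintype.card ι ≤ M.rank :=
  (rank_of_isUnit _ h).symm.trans_le (rank_submatrix_le M f g)

theorem exists_strictMono_linearIndependent_cols {m : Type*} {b k : ℕ} (M : Matrix m (Fin b) K)
    (hk : M.rank = k) :
    ∃ g : Fin k → Fin b, StrictMono g ∧ LinearIndependent K fun j => M.col (g j) := by
  classical
  obtain ⟨s, -, -, hspan, hind⟩ :=
    exists_linearIndepOn_extension (linearIndepOn_empty K M.col) (Set.subset_univ _)
  have hs : Submodule.span K (M.col '' s) = Submodule.span K (Set.range M.col) :=
    le_antisymm (Submodule.span_mono (Set.image_subset_range _ _))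
      (Submodule.span_le.mpr (by simpa using hspan))
  have hcard : s.toFinset.card = k := by
    rw [← hk, rank_eq_finrank_span_cols, ← hs, Set.image_eq_range, finrank_span_eq_card hind,
      Set.toFinset_card]
  refine ⟨s.toFinset.orderEmbOfFin hcard, (s.toFinset.orderEmbOfFin hcard).strictMono, ?_⟩
  rw [← Function.comp_def, ← linearIndepOn_range_iff (s.toFinset.orderEmbOfFin hcard).injective,
    range_orderEmbOfFin, Set.coe_toFinset]
  exact hind

theorem exists_strictMono_isUnit_submatrix {a b k : ℕ} (M : Matrix (Fin a) (Fin b) K)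
    (hk : M.rank = k) : ∃ (f : Fin k → Fin a) (g : Fin k → Fin b),
      StrictMono f ∧ StrictMono g ∧ IsUnit (M.submatrix f g) := by
  obtain ⟨g, hg, hgind⟩ := exists_strictMono_linearIndependent_cols M hk
  have hrank : (M.submatrix id g)ᵀ.rank = k := by
    simpa using LinearIndependent.rank_matrix (M := (M.submatrix id g)ᵀ) hgind
  obtain ⟨f, hf, hfind⟩ := exists_strictMono_linearIndependent_cols _ hrank
  exact ⟨f, g, hf, hg, linearIndependent_rows_iff_isUnit.mp hfind⟩

end Matrix

theorem StrictMonoOn.exists_strictMono_fin {α : ℕ → ℕ} {p m : ℕ}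
    (hα : StrictMonoOn α (Set.Iic p)) (hαp : α p ≤ m) :
    ∃ f : Fin (p + 1) → Fin (m + 1), StrictMono f ∧ ∀ i, (f i : ℕ) = α i := by
  have hle (i : Fin (p + 1)) : α i ≤ α p :=
    hα.monotoneOn (Set.mem_Iic.mpr i.is_le) Set.self_mem_Iic i.is_le
  exact ⟨fun i => ⟨α i, by have := hle i; omega⟩,
    fun i j hij => hα (Set.mem_Iic.mpr i.is_le) (Set.mem_Iic.mpr j.is_le) hij, fun _ => rfl⟩

open Fin.NatCast in
theorem StrictMono.strictMonoOn_natCast {p m : ℕ} {f : Fin (p + 1) → Fin (m + 1)}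
    (hf : StrictMono f) : StrictMonoOn (fun x : ℕ => (f (x : Fin (p + 1)) : ℕ)) (Set.Iic p) :=
  fun _ _ _ hy hxy => hf (Fin.natCast_strictMono hy hxy)

open Fin.NatCast in
theorem exists_orderedSubPair_iff {r c : ℕ → ℕ} {m n p : ℕ} :
    (∃ α β, OrderedSubPair r c m n p α β) ↔
      ∃ (f : Fin (p + 1) → Fin (m + 1)) (g : Fin (p + 1) → Fin (n + 1)),
        StrictMono f ∧ StrictMono g ∧ ∀ i, r (f i) ≤ c (g i) := by
  constructor
  · rintro ⟨α, β, hα, hβ, hαm, hβn, hrc⟩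
    obtain ⟨f, hf, hfα⟩ := hα.exists_strictMono_fin hαm
    obtain ⟨g, hg, hgβ⟩ := hβ.exists_strictMono_fin hβn
    exact ⟨f, g, hf, hg, fun i => by rw [hfα, hgβ]; exact hrc i i.is_le⟩
  · rintro ⟨f, g, hf, hg, hrc⟩
    exact ⟨_, _, hf.strictMonoOn_natCast, hg.strictMonoOn_natCast, (f _).is_le, (g _).is_le,
      fun i _ => hrc (i : Fin (p + 1))⟩

theorem pascalSub_submatrix {r c : ℕ → ℕ} {m n k : ℕ} (f : Fin k → Fin (m + 1))
    (g : Fin k → Fin (n + 1)) :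
    (pascalSub r c m n).submatrix f g = binomialMatrix (fun i => r (f i)) (fun j => c (g j)) :=
  rfl

theorem exists_orderedSubPair_iff_le_rank {r c : ℕ → ℕ} {m n p : ℕ} (hr : StrictMono r)
    (hc : StrictMono c) :
    (∃ α β, OrderedSubPair r c m n p α β) ↔ p + 1 ≤ (pascalSub r c m n).rank := by
  have hdet {k : ℕ} {f : Fin k → Fin (m + 1)} {g : Fin k → Fin (n + 1)} (hf : StrictMono f)
      (hg : StrictMono g) :
      IsUnit ((pascalSub r c m n).submatrix f g) ↔ ∀ i, r (f i) ≤ c (g i) := by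
    rw [isUnit_iff_isUnit_det, isUnit_iff_ne_zero, pascalSub_submatrix]
    exact binomialMatrix.det_ne_zero_iff (hr.comp (Fin.val_strictMono.comp hf))
      (hc.comp (Fin.val_strictMono.comp hg))
  rw [exists_orderedSubPair_iff]
  constructor
  · rintro ⟨f, g, hf, hg, hrc⟩
    simpa using Matrix.card_le_rank_of_isUnit_submatrix (pascalSub r c m n) ((hdet hf hg).mpr hrc)
  · intro hp
    obtain ⟨f, g, hf, hg, hunit⟩ := (pascalSub r c m n).exists_strictMono_isUnit_submatrix rfl
    have hcast := Fin.strictMono_castLE hp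
    exact ⟨f ∘ Fin.castLE hp, g ∘ Fin.castLE hp, hf.comp hcast, hg.comp hcast,
      fun i => (hdet hf hg).mp hunit _⟩

/-- The rank of the Pascal submatrix `T_{r,c}` equals the maximal length of an
ordered sub-pair for `{[r 0, …, r m], [c 0, …, c n]}` (and equals `0` when no
ordered sub-pair exists). -/
theorem pascal_rank_eq_sSup_orderedSubPair_lengths
    (m n : ℕ) (r c : ℕ → ℕ) (hr : StrictMono r) (hc : StrictMono c) :
    (pascalSub r c m n).rank =
      sSup {L : ℕ | L = 0 ∨ ∃ (p : ℕ) (α β : ℕ → ℕ),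
        L = p + 1 ∧ OrderedSubPair r c m n p α β} := by
  have hlengths : {L : ℕ | L = 0 ∨ ∃ (p : ℕ) (α β : ℕ → ℕ),
      L = p + 1 ∧ OrderedSubPair r c m n p α β} = Set.Iic (pascalSub r c m n).rank := by
    ext (_ | p) <;> simp [← exists_orderedSubPair_iff_le_rank hr hc]
  rw [hlengths, csSup_Iic]
end

section
/- Let r = [r_0, ..., r_m] and c = [c_0, ..., c_n] be strictly increasing sequences of natural numbers, and let {r̂, ĉ} be a maximal ordered sub-pair for {r, c} of length p+1, with r̂ a subsequence of r selected by indices α_0 < ... < α_p. Then the rows of T_{r,c} indexed by α_0, ..., α_p (i.e., the rows of T_{r̂,c}) span the row space of T_{r,c}. -/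
/-!
The rows `α 0, …, α p` are linearly independent because their minor on the columns
`β 0, …, β p` has positive determinant: for strictly increasing `a ≤ b`,
`det (C(b j, a i)) > 0`. This goes by induction, peeling off `C(b, a) = b / a · C(b - 1, a - 1)`
while `a 0 > 0`; once `a 0 = 0`, successive column differences and the hockey-stick identity
expand the determinant into a sum of smaller determinants of the same kind, all nonnegative
and one of them positive.

Conversely, if rows `k 0 < ⋯ < k q` of `T_{r,c}` are linearly independent then
`r (k i) ≤ c (n - q + i)`, since otherwise rows `k i, …, k q` would all vanish on the first
`n - q + i + 1` columns. So independent rows always form an ordered sub-pair, and maximality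
forbids adjoining a further row to the `α`-rows.
-/

open Finset Matrix

theorem LinearIndependent.card_le_card_of_forall_notMem_eq_zero {ι κ K : Type*} [Field K]
    [Fintype ι] {v : ι → κ → K} (hv : LinearIndependent K v) (S : Finset κ)
    (hS : ∀ i, ∀ j ∉ S, v i j = 0) : Fintype.card ι ≤ #S := by
  have hrestrict : LinearIndependent K fun i (j : S) => v i j := by
    rw [Fintype.linearIndependent_iff] at hv ⊢
    refine fun g hg => hv g (funext fun j => ?_)
    by_cases hj : j ∈ S
    · simpa using congr_fun hg ⟨j, hj⟩
    · simp [hS _ j hj]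
  simpa using hrestrict.fintype_card_le_finrank

theorem Matrix.det_of_sum_col {n ι R : Type*} [Fintype n] [DecidableEq n] [CommRing R]
    (s : n → Finset ι) (f : ι → n → R) :
    det (of fun i j => ∑ t ∈ s j, f t i) =
      ∑ t ∈ Fintype.piFinset s, det (of fun i j => f (t j) i) := by
  rw [← det_transpose]
  convert (detRowAlternating : (n → R) [⋀^n]→ₗ[R] R).map_sum_finset (fun _ t => f t) s
    using 1
  · congr 1; ext j i; simp [Finset.sum_apply]
  · refine Finset.sum_congr rfl fun t _ => ?_
    rw [← det_transpose]; rfl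

theorem Finset.sum_Ico_cast_choose {R : Type*} [AddCommGroupWithOne R] {u v : ℕ} (h : u ≤ v)
    (s : ℕ) : ∑ t ∈ Ico u v, (t.choose s : R) = v.choose (s + 1) - u.choose (s + 1) := by
  induction v, h using Nat.le_induction with
  | base => simp
  | succ v hv ih =>
    rw [sum_Ico_succ_top hv, ih, Nat.choose_succ_succ', Nat.cast_add]
    abel

def chooseMatrix (R : Type*) [NatCast R] {m n : Type*} (a : m → ℕ) (b : n → ℕ) :
    Matrix m n R :=
  of fun i j => ((b j).choose (a i) : R)

section
variable {K : Type*} [Field K]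

theorem le_of_linearIndependent_chooseMatrix {d N : ℕ} {a : Fin d → ℕ} {b : Fin N → ℕ}
    (ha : Monotone a) (hb : Monotone b) (hind : LinearIndependent K (chooseMatrix K a b))
    {k : Fin d} {j : Fin N} (hkj : N ≤ d - k + j) : a k ≤ b j := by
  by_contra! hlt
  have hcard := (hind.comp (Subtype.val : Set.Ici k → Fin d) Subtype.val_injective)
    |>.card_le_card_of_forall_notMem_eq_zero (Ioi j) fun k' j' hj' => by
      have : b j' < a k' :=
        (hb (not_lt.1 (mem_Ioi.not.1 hj'))).trans_lt (hlt.trans_le (ha k'.2))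
      simp [chooseMatrix, Function.comp, Nat.choose_eq_zero_of_lt this]
  rw [Fintype.card_Ici, Fin.card_Ici, Fin.card_Ioi] at hcard
  omega

theorem det_chooseMatrix_eq_zero {d : ℕ} {a b : Fin d → ℕ} (ha : Monotone a) (hb : Monotone b)
    {k : Fin d} (hk : b k < a k) : det (chooseMatrix K a b) = 0 := by
  by_contra hdet
  exact hk.not_ge <| le_of_linearIndependent_chooseMatrix ha hb
    (linearIndependent_rows_of_det_ne_zero hdet) (by omega)
end

section
variable {R : Type*} [CommRing R]

theorem prod_mul_det_chooseMatrix_add_one {k : ℕ} (a b : Fin k → ℕ) :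
    (∏ i, (a i + 1 : R)) * det (chooseMatrix R (a + 1) (b + 1)) =
      (∏ j, (b j + 1 : R)) * det (chooseMatrix R a b) := by
  rw [← det_mul_column, ← det_mul_row]
  congr 1
  ext i j
  simp only [chooseMatrix, of_apply, Pi.add_apply, Pi.one_apply]
  have h := congrArg (Nat.cast : ℕ → R) (Nat.add_one_mul_choose_eq (b j) (a i))
  push_cast at h
  linear_combination -h

theorem det_chooseMatrix_cons_zero {k : ℕ} (a : Fin k → ℕ) {b : Fin (k + 1) → ℕ}
    (hb : Monotone b) :
    det (chooseMatrix R (Fin.cons 0 (a + 1)) b) =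
      ∑ t ∈ Fintype.piFinset fun j : Fin k => Ico (b j.castSucc) (b j.succ),
        det (chooseMatrix R a t) := by
  set A := chooseMatrix R (Fin.cons 0 (a + 1)) b
  let B : Matrix (Fin (k + 1)) (Fin (k + 1)) R :=
    of fun i j => Fin.cases (A i 0) (fun j' => A i j'.succ - A i j'.castSucc) j
  have hAB : det A = det B :=
    det_eq_of_forall_col_eq_smul_add_pred (fun _ => 1) (fun _ => rfl) fun i j => by simp [B]
  have hB0 : ∀ j, B 0 j = Pi.single (M := fun _ => R) 0 1 j := by
    intro j; cases j using Fin.cases <;> simp [B, A, chooseMatrix]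
  have hBsucc : B.submatrix Fin.succ Fin.succ =
      of fun i j => ∑ t ∈ Ico (b j.castSucc) (b j.succ), (t.choose (a i) : R) := by
    ext i j
    simp [B, A, chooseMatrix, Finset.sum_Ico_cast_choose (hb (Fin.castSucc_le_succ j))]
  rw [hAB, det_succ_row_zero, Fin.sum_univ_succ]
  simp [hB0, Fin.succAbove_zero, hBsucc, det_of_sum_col, chooseMatrix]
end

section
variable {K : Type*} [Field K] [LinearOrder K] [IsStrictOrderedRing K]

theorem det_chooseMatrix_pos_of_head_eq_zero {k : ℕ}
    (ih : ∀ a b : Fin k → ℕ, StrictMono a → StrictMono b → a ≤ b →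
      0 < det (chooseMatrix K a b))
    {a b : Fin (k + 1) → ℕ} (ha : StrictMono a) (hb : StrictMono b) (hab : a ≤ b)
    (h0 : a 0 = 0) : 0 < det (chooseMatrix K a b) := by
  have hpos : ∀ i : Fin k, 0 < a i.succ := fun i => h0 ▸ ha (Fin.succ_pos i)
  set a' : Fin k → ℕ := fun i => a i.succ - 1
  have ha' : StrictMono a' := fun i i' h => by
    have := ha (Fin.succ_lt_succ_iff.2 h); have := hpos i; simp only [a']; omega
  have hcons : a = Fin.cons 0 (a' + 1) := by
    ext i
    cases i using Fin.cases with
    | zero => exact h0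
    | succ i => have := hpos i; simp [a']; omega
  have hmono : ∀ t ∈ Fintype.piFinset fun j : Fin k => Ico (b j.castSucc) (b j.succ),
      StrictMono t := by
    intro t ht j j' hjj'
    simp only [Fintype.mem_piFinset, mem_Ico] at ht
    calc t j < b j.succ := (ht j).2
      _ ≤ b j'.castSucc := hb.monotone (Fin.succ_le_castSucc_iff.2 hjj')
      _ ≤ t j' := (ht j').1
  have hgap : ∀ j : Fin k, b j.castSucc < b j.succ :=
    fun j => hb (Fin.castSucc_lt_succ (i := j))
  rw [hcons, det_chooseMatrix_cons_zero a' hb.monotone]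
  refine sum_pos' (fun t ht => ?_) ⟨fun j => b j.succ - 1, ?_, ih _ _ ha' ?_ fun i => ?_⟩
  · by_cases hle : a' ≤ t
    · exact (ih a' t ha' (hmono t ht) hle).le
    · simp only [Pi.le_def, not_forall, not_le] at hle
      obtain ⟨j, hj⟩ := hle
      exact (det_chooseMatrix_eq_zero ha'.monotone (hmono t ht).monotone hj).ge
  · simp only [Fintype.mem_piFinset, mem_Ico]
    intro j; have := hgap j; omega
  · intro j j' hjj'
    have := hb (Fin.succ_lt_succ_iff.2 hjj'); have := hgap j; dsimp only; omega
  · have : a i.succ ≤ b i.succ := hab i.succ; show a i.succ - 1 ≤ b i.succ - 1; omega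

theorem det_chooseMatrix_pos {k : ℕ} {a b : Fin k → ℕ} (ha : StrictMono a) (hb : StrictMono b)
    (hab : a ≤ b) : 0 < det (chooseMatrix K a b) := by
  induction k with
  | zero => simp [det_isEmpty]
  | succ k ih =>
    obtain ⟨s, hs⟩ : ∃ s, a 0 = s := ⟨_, rfl⟩
    induction s generalizing a b with
    | zero => exact det_chooseMatrix_pos_of_head_eq_zero (fun _ _ => ih) ha hb hab hs
    | succ s ihs =>
      have hpos : ∀ i, 0 < a i := fun i => by
        have := ha.monotone i.zero_le; omega
      have ha' : a = (a - 1) + 1 := by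
        ext i; have := hpos i; simp only [Pi.add_apply, Pi.sub_apply, Pi.one_apply]; omega
      have hb' : b = (b - 1) + 1 := by
        ext i; have := hpos i; have : a i ≤ b i := hab i
        simp only [Pi.add_apply, Pi.sub_apply, Pi.one_apply]; omega
      have hdet := prod_mul_det_chooseMatrix_add_one (R := K) (a - 1) (b - 1)
      rw [← ha', ← hb'] at hdet
      have hprev : 0 < det (chooseMatrix K (a - 1) (b - 1)) := by
        refine ihs (fun i i' h => ?_) (fun i i' h => ?_) (fun i => ?_) ?_ <;>
          simp only [Pi.sub_apply, Pi.one_apply]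
        · have := ha h; have := hpos i; omega
        · have := hb h; have := hpos i; have : a i ≤ b i := hab i; omega
        · have : a i ≤ b i := hab i; omega
        · omega
      refine pos_of_mul_pos_right (hdet ▸ mul_pos ?_ hprev) ?_ <;> positivity
end

section
variable {r c : ℕ → ℕ} {m n p : ℕ} {α β : ℕ → ℕ}

theorem OrderedSubPair.fst_le (h : OrderedSubPair r c m n p α β) {i : ℕ} (hi : i ≤ p) :
    α i ≤ m :=
  (h.1.monotoneOn hi Set.self_mem_Iic hi).trans h.2.2.1

theorem OrderedSubPair.snd_le (h : OrderedSubPair r c m n p α β) {i : ℕ} (hi : i ≤ p) :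
    β i ≤ n :=
  (h.2.1.monotoneOn hi Set.self_mem_Iic hi).trans h.2.2.2.1

theorem OrderedSubPair.linearIndependent_chooseMatrix {K : Type*} [Field K] [LinearOrder K]
    [IsStrictOrderedRing K] (hr : StrictMono r) (hc : StrictMono c)
    (h : OrderedSubPair r c m n p α β) :
    LinearIndependent K
      (chooseMatrix K (fun i : Fin (p + 1) => r (α i)) fun j : Fin (n + 1) => c j) := by
  let β' : Fin (p + 1) → Fin (n + 1) := fun i => ⟨β i, Nat.lt_succ_of_le (h.snd_le i.is_le)⟩
  refine .of_comp (LinearMap.funLeft K K β') (linearIndependent_rows_of_det_ne_zero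
    (det_chooseMatrix_pos (b := fun i => c (β i)) (fun i i' hii' => ?_) (fun i i' hii' => ?_)
      fun i => h.2.2.2.2 i i.is_le).ne')
  · exact hr (h.1 i.is_le i'.is_le hii')
  · exact hc (h.2.1 i.is_le i'.is_le hii')

theorem exists_orderedSubPair_of_strictMono {q : ℕ} {a : Fin (q + 1) → Fin (m + 1)}
    {b : Fin (q + 1) → Fin (n + 1)} (ha : StrictMono a) (hb : StrictMono b)
    (hab : ∀ i, r (a i) ≤ c (b i)) : ∃ α β, OrderedSubPair r c m n q α β := by
  have hval : ∀ k ∈ Set.Iic q, ((Fin.ofNat (q + 1) k : Fin (q + 1)) : ℕ) = k :=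
    fun k hk => Nat.mod_eq_of_lt (Nat.lt_succ_of_le hk)
  refine ⟨fun k => a (Fin.ofNat (q + 1) k), fun k => b (Fin.ofNat (q + 1) k),
    fun k hk k' hk' h => ha ?_, fun k hk k' hk' h => hb ?_, (a _).is_le, (b _).is_le,
    fun k _ => hab _⟩ <;>
  rwa [Fin.lt_def, hval k hk, hval k' hk']
end

theorem exists_orderedSubPair_of_linearIndependent {r c : ℕ → ℕ} (hr : Monotone r)
    (hc : Monotone c) {m n q : ℕ} {v : Fin (q + 1) → Fin (m + 1)}
    (hv : LinearIndependent ℚ fun k => pascalSub r c m n (v k)) :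
    ∃ α β, OrderedSubPair r c m n q α β := by
  set σ := Tuple.sort v
  have hsorted : StrictMono (v ∘ σ) := (Tuple.monotone_sort v).strictMono_of_injective
    (hv.injective.of_comp.comp σ.injective)
  have hind : LinearIndependent ℚ
      (chooseMatrix ℚ (fun k => r (v (σ k))) fun j : Fin (n + 1) => c j) :=
    hv.comp σ σ.injective
  have hqn : q ≤ n := by simpa using hind.fintype_card_le_finrank
  refine exists_orderedSubPair_of_strictMono hsorted (b := fun k => ⟨n - q + k, by omega⟩)
    (fun _ _ h => Fin.mk_lt_mk.2 (Nat.add_lt_add_left h _)) fun k =>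
      le_of_linearIndependent_chooseMatrix
        (hr.comp (Fin.val_strictMono.monotone.comp hsorted.monotone))
        (hc.comp Fin.val_strictMono.monotone) hind (by have := k.isLt; dsimp only; omega)

/-- If `{r ∘ α, c ∘ β}` is a maximal ordered sub-pair of length `p + 1` for
`{[r 0, …, r m], [c 0, …, c n]}`, then the rows of `T_{r,c}` indexed by
`α 0, …, α p` (i.e. the rows of `T_{r̂,c}`) span the row space of `T_{r,c}`. -/
theorem pascal_maximal_orderedSubPair_rows_span
    (m n p : ℕ) (r c α β : ℕ → ℕ) (hr : StrictMono r) (hc : StrictMono c)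
    (hsub : OrderedSubPair r c m n p α β)
    (hmax : ∀ (q : ℕ) (α' β' : ℕ → ℕ), OrderedSubPair r c m n q α' β' → q ≤ p) :
    Submodule.span ℚ {x : Fin (n + 1) → ℚ | ∃ i ≤ p,
        x = fun j : Fin (n + 1) => ((c (j : ℕ)).choose (r (α i)) : ℚ)} =
      Submodule.span ℚ (Set.range fun i : Fin (m + 1) => pascalSub r c m n i) := by
  let α' : Fin (p + 1) → Fin (m + 1) :=
    fun i => ⟨α i, Nat.lt_succ_of_le (hsub.fst_le i.is_le)⟩
  have hset : {x : Fin (n + 1) → ℚ | ∃ i ≤ p,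
      x = fun j : Fin (n + 1) => ((c (j : ℕ)).choose (r (α i)) : ℚ)} =
      Set.range fun k => pascalSub r c m n (α' k) := by
    ext x
    constructor
    · rintro ⟨i, hi, rfl⟩
      exact ⟨⟨i, Nat.lt_succ_of_le hi⟩, rfl⟩
    · rintro ⟨i, rfl⟩
      exact ⟨i, i.is_le, rfl⟩
  have hind : LinearIndependent ℚ fun k => pascalSub r c m n (α' k) :=
    hsub.linearIndependent_chooseMatrix hr hc
  rw [hset]
  refine le_antisymm (Submodule.span_mono (Set.range_subset_iff.2 fun k => ⟨α' k, rfl⟩))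
    (Submodule.span_le.2 (Set.range_subset_iff.2 fun i => ?_))
  by_contra hi
  let v : Fin (p + 2) → Fin (m + 1) := Fin.cons i α'
  have hcons : LinearIndependent ℚ fun k => pascalSub r c m n (v k) := by
    have hrows : (fun k => pascalSub r c m n (v k)) =
        Fin.cons (pascalSub r c m n i) fun k => pascalSub r c m n (α' k) := by
      ext k : 1
      cases k using Fin.cases <;> rfl
    rw [hrows]
    exact linearIndependent_finCons.2 ⟨hind, hi⟩
  obtain ⟨_, _, hlonger⟩ :=
    exists_orderedSubPair_of_linearIndependent hr.monotone hc.monotone hcons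
  exact (hmax _ _ _ hlonger).not_gt p.lt_succ_self
end

section
/- Let r = [r_0, ..., r_m] and c = [c_0, ..., c_n] be strictly increasing sequences of natural numbers, and let {r̂, ĉ} be an ordered sub-pair for {r, c} of length p+1 selected by index sequences α_0 < ... < α_p (rows) and β_0 < ... < β_p (columns), so r̂_i = r_{α_i} and ĉ_i = c_{β_i}. Let I_{r̂,ĉ} be the (m+1)×(n+1) matrix whose (α_i, β_i) entries are 1 for i = 0, ..., p and all other entries 0. Then rank(I_{r̂,ĉ}) = p+1 = rank(T_{r̂,ĉ}), where T_{r̂,ĉ} is the (p+1)×(p+1) matrix with (i,j) entry C(ĉ_j, r̂_i). Moreover, if {r̂, ĉ} is maximal, then rank(T_{r,c}) = rank(I_{r̂,ĉ}). -/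
namespace Matrix

open Finset

variable {R : Type*} [CommRing R]

theorem det_eq_zero_of_zero_block {q : ℕ} (M : Matrix (Fin q) (Fin q) R) (k : Fin q)
    (h : ∀ i j, k ≤ i → j ≤ k → M i j = 0) : M.det = 0 := by
  rw [det_apply]
  refine Finset.sum_eq_zero fun σ _ => ?_
  -- pigeonhole: `σ` cannot map the `k + 1` columns `≤ k` into the `k` rows `< k`
  obtain ⟨j, hjk, hkσ⟩ : ∃ j ≤ k, k ≤ σ j := by
    by_contra! hlt
    have := Finset.card_le_card_of_injOn σ (fun j hj => mem_Iio.2 (hlt j (mem_Iic.1 hj)))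
      σ.injective.injOn
    simp only [Fin.card_Iic, Fin.card_Iio] at this
    omega
  rw [Finset.prod_eq_zero (f := fun i => M (σ i) i) (mem_univ j) (h _ _ hkσ hjk), smul_zero]

variable {K : Type*} [Field K]

open Classical in
theorem rank_eq_card_of_eq_ite_exists {ι κ η : Type*} [Fintype κ] [Fintype η]
    {f : η → ι} {g : η → κ} (hf : f.Injective) (hg : g.Injective) (M : Matrix ι κ K)
    (hM : ∀ a b, M a b = if ∃ k, f k = a ∧ g k = b then 1 else 0) :
    M.rank = Fintype.card η := by
  classical
  apply le_antisymm
  · calc M.rank ≤ (univ.image f).card := by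
          refine M.rank_le_card_of_support_subset _ fun a ha => ?_
          by_contra hnot
          refine ha (funext fun b => ?_)
          simp_all
      _ ≤ Fintype.card η := card_image_le
  · have hsub : M.submatrix f g = 1 := by
      ext i j
      simp [hM, one_apply, hf.eq_iff, hg.eq_iff]
    calc Fintype.card η = (M.submatrix f g).rank := by rw [hsub, rank_one]
      _ ≤ M.rank := M.rank_submatrix_le f g

theorem exists_strictMono_linearIndependent_row {M N k : ℕ} (A : Matrix (Fin M) (Fin N) K)
    (hk : k ≤ A.rank) :
    ∃ f : Fin k → Fin M, StrictMono f ∧ LinearIndependent K (A.submatrix f id).row := by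
  obtain ⟨b, -, -, hspan, hli⟩ :=
    exists_linearIndepOn_extension (linearIndepOn_empty K A.row) (Set.empty_subset Set.univ)
  have : Fintype b := b.toFinite.fintype
  have hkb : k ≤ b.toFinset.card := by
    calc k ≤ A.rank := hk
      _ ≤ Set.finrank K (A.row '' b) := by
          rw [rank_eq_finrank_span_row]
          refine Submodule.finrank_mono (Submodule.span_le.2 ?_)
          simpa using hspan
      _ = b.toFinset.card := by
          rw [Set.toFinset_card, linearIndependent_iff_card_eq_finrank_span.1 hli,
            Set.image_eq_range]
  obtain ⟨t, htb, htk⟩ := Finset.exists_subset_card_eq hkb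
  refine ⟨t.orderEmbOfFin htk, (t.orderEmbOfFin htk).strictMono, ?_⟩
  exact hli.comp (fun i => ⟨_, Set.mem_toFinset.1 (htb (t.orderEmbOfFin_mem htk i))⟩)
    fun i j hij => (t.orderEmbOfFin htk).injective (by simpa using hij)

theorem exists_det_submatrix_ne_zero {M N k : ℕ} (A : Matrix (Fin M) (Fin N) K)
    (hk : k ≤ A.rank) : ∃ f : Fin k → Fin M, ∃ g : Fin k → Fin N,
      StrictMono f ∧ StrictMono g ∧ (A.submatrix f g).det ≠ 0 := by
  obtain ⟨f, hf, hfli⟩ := exists_strictMono_linearIndependent_row A hk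
  have hrank : k ≤ (A.submatrix f id)ᵀ.rank := by
    rw [rank_transpose, hfli.rank_matrix, Fintype.card_fin]
  obtain ⟨g, hg, hgli⟩ := exists_strictMono_linearIndependent_row _ hrank
  have hunit : IsUnit (A.submatrix f g) := linearIndependent_cols_iff_isUnit.1 hgli
  exact ⟨f, g, hf, hg, ((isUnit_iff_isUnit_det _).1 hunit).ne_zero⟩

end Matrix

section BinomMatrix

open Finset

variable {R : Type*} [CommRing R]

def binomMatrix {ι κ : Type*} (r : ι → ℕ) (c : κ → ℕ) : Matrix ι κ R :=
  Matrix.of fun i j => ((c j).choose (r i) : R)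

@[simp]
theorem binomMatrix_apply {ι κ : Type*} (r : ι → ℕ) (c : κ → ℕ) (i : ι) (j : κ) :
    binomMatrix (R := R) r c i j = (c j).choose (r i) :=
  rfl

@[simp]
theorem binomMatrix_submatrix {ι κ ι' κ' : Type*} (r : ι → ℕ) (c : κ → ℕ) (f : ι' → ι)
    (g : κ' → κ) : (binomMatrix (R := R) r c).submatrix f g = binomMatrix (r ∘ f) (c ∘ g) :=
  rfl

variable {q : ℕ}

theorem det_binomMatrix_eq_zero_of_lt {r c : Fin q → ℕ} (hr : Monotone r) (hc : Monotone c)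
    {k : Fin q} (hk : c k < r k) : (binomMatrix (R := R) r c).det = 0 :=
  Matrix.det_eq_zero_of_zero_block _ k fun i j hki hjk => by
    rw [binomMatrix_apply, Nat.choose_eq_zero_of_lt ((hc hjk).trans_lt (hk.trans_le (hr hki))),
      Nat.cast_zero]

theorem det_binomMatrix_eq_of_head_eq {r c : Fin (q + 1) → ℕ} (hr : StrictMono r)
    (h0 : r 0 = c 0) :
    (binomMatrix (R := R) r c).det = (binomMatrix (r ∘ Fin.succ) (c ∘ Fin.succ)).det := by
  rw [Matrix.det_succ_column_zero, Fintype.sum_eq_single 0 fun i hi => ?_]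
  · simp [h0]
  · rw [binomMatrix_apply, Nat.choose_eq_zero_of_lt (h0 ▸ hr (Fin.pos_iff_ne_zero.2 hi)),
      Nat.cast_zero, mul_zero, zero_mul]

def decrOutside {ι : Type*} [DecidableEq ι] (s : Finset ι) (r : ι → ℕ) (i : ι) : ℕ :=
  if i ∈ s then r i else r i - 1

theorem monotone_decrOutside {r : Fin q → ℕ} (hr : StrictMono r) (s : Finset (Fin q)) :
    Monotone (decrOutside s r) :=
  monotone_iff_forall_lt.2 fun i j hij => by
    have := hr hij
    unfold decrOutside
    split_ifs <;> omega

theorem det_binomMatrix_eq_sum_decrOutside {r c : Fin q → ℕ} (hc : ∀ j, c j ≠ 0) :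
    (binomMatrix (R := R) r c).det =
      ∑ s with ∀ i ∉ s, r i ≠ 0, (binomMatrix (R := R) (decrOutside s r) (c · - 1)).det := by
  set m₁ : Fin q → Fin q → R := fun i j => (c j - 1).choose (r i)
  set m₂ : Fin q → Fin q → R := fun i j => if r i = 0 then 0 else (c j - 1).choose (r i - 1)
  have hpascal : binomMatrix r c = Matrix.of (m₁ + m₂) := by
    ext i j
    obtain ⟨d, hd⟩ := Nat.exists_eq_succ_of_ne_zero (hc j)
    rcases Nat.eq_zero_or_eq_succ_pred (r i) with h | h
    · simp [m₁, m₂, h]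
    · simp only [binomMatrix_apply, Matrix.of_apply, Pi.add_apply, m₁, m₂, hd, Nat.succ_sub_one]
      rw [h, Nat.choose_succ_succ, if_neg (Nat.succ_ne_zero _)]
      push_cast
      ring
  rw [hpascal, Matrix.det]
  refine ((Matrix.detRowAlternating (R := R)).toMultilinearMap.map_add_univ m₁ m₂).trans ?_
  rw [Finset.sum_filter]
  refine Finset.sum_congr rfl fun s _ => ?_
  split_ifs with hs
  · have hrows : s.piecewise m₁ m₂ = binomMatrix (R := R) (decrOutside s r) (c · - 1) := by
      funext i j
      by_cases hi : i ∈ s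
      · simp [decrOutside, hi, m₁]
      · simp [decrOutside, hi, m₂, hs i hi]
    rw [hrows]
    rfl
  · push Not at hs
    obtain ⟨i, his, hri⟩ := hs
    exact Matrix.det_eq_zero_of_row_eq_zero i fun j => by
      simp [s.piecewise_eq_of_notMem _ _ his, m₂, hri]

theorem strictMono_decrOutside_filter_lt {r c : Fin q → ℕ} (hr : StrictMono r)
    (hc : StrictMono c) (hc0 : ∀ j, c j ≠ 0) (hrc : ∀ i, r i ≤ c i) :
    StrictMono (decrOutside {i | r i < c i} r) := fun i j hij => by
  have := hr hij
  have := hc hij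
  have := hc0 i
  have := hrc i
  have := hrc j
  simp only [decrOutside, mem_filter_univ]
  split_ifs <;> omega

theorem decrOutside_filter_lt_le {r c : Fin q → ℕ} (hrc : ∀ i, r i ≤ c i) (i : Fin q) :
    decrOutside {i | r i < c i} r i ≤ c i - 1 := by
  have := hrc i
  simp only [decrOutside, mem_filter_univ]
  split_ifs <;> omega

variable [PartialOrder R]

theorem det_binomMatrix_nonneg_of_pos {c : Fin q → ℕ} (hc : Monotone c)
    (hpos : ∀ r : Fin q → ℕ, StrictMono r → (∀ i, r i ≤ c i) → 0 < (binomMatrix (R := R) r c).det)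
    {r : Fin q → ℕ} (hr : Monotone r) : 0 ≤ (binomMatrix (R := R) r c).det := by
  by_cases hinj : r.Injective
  · by_cases hrc : ∀ i, r i ≤ c i
    · exact (hpos r (hr.strictMono_of_injective hinj) hrc).le
    · push Not at hrc
      obtain ⟨k, hk⟩ := hrc
      exact (det_binomMatrix_eq_zero_of_lt hr hc hk).ge
  · obtain ⟨i, j, hrij, hij⟩ := Function.not_injective_iff.1 hinj
    exact (Matrix.det_zero_of_row_eq hij (funext fun k => by simp [hrij])).ge

variable [IsStrictOrderedRing R]

theorem det_binomMatrix_pos : ∀ {q : ℕ} {r c : Fin q → ℕ}, StrictMono r → StrictMono c →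
    (∀ i, r i ≤ c i) → 0 < (binomMatrix (R := R) r c).det
  | 0, _, _, _, _, _ => by simp
  | q + 1, r, c, hr, hc, hrc => by
    by_cases hc0 : c 0 = 0
    · rw [det_binomMatrix_eq_of_head_eq hr (by have := hrc 0; omega)]
      exact det_binomMatrix_pos (hr.comp Fin.strictMono_succ) (hc.comp Fin.strictMono_succ)
        fun i => hrc i.succ
    have hc_ne : ∀ j, c j ≠ 0 := fun j => by
      have := hc.monotone (Fin.zero_le j)
      omega
    have hc' : StrictMono (c · - 1) := fun i j hij => by
      show c i - 1 < c j - 1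
      have := hc hij
      have := hc_ne i
      omega
    have hpos : ∀ r' : Fin (q + 1) → ℕ, StrictMono r' → (∀ i, r' i ≤ c i - 1) →
        0 < (binomMatrix (R := R) r' (c · - 1)).det :=
      fun r' hr' hrc' => det_binomMatrix_pos hr' hc' hrc'
    rw [det_binomMatrix_eq_sum_decrOutside hc_ne]
    refine Finset.sum_pos' (fun s _ => det_binomMatrix_nonneg_of_pos hc'.monotone hpos
      (monotone_decrOutside hr s)) ⟨univ.filter fun i => r i < c i, ?_, hpos _
        (strictMono_decrOutside_filter_lt hr hc hc_ne hrc) (decrOutside_filter_lt_le hrc)⟩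
    simp only [mem_filter_univ]
    exact fun i hi => (le_antisymm (hrc i) (not_lt.1 hi)).symm ▸ hc_ne i
termination_by q _ c => q + ∑ j, c j
decreasing_by
  · rw [Fin.sum_univ_succ c]
    simp only [Function.comp_apply]
    omega
  · exact Nat.add_lt_add_left (Finset.sum_lt_sum_of_nonempty univ_nonempty fun j _ =>
      Nat.sub_one_lt (hc_ne j)) _

end BinomMatrix

section OrderedSubPair

theorem StrictMonoOn.exists_fin {α : ℕ → ℕ} {p m : ℕ} (hα : StrictMonoOn α (Set.Iic p))
    (hm : α p ≤ m) : ∃ f : Fin (p + 1) → Fin (m + 1), StrictMono f ∧ ∀ i, (f i : ℕ) = α i :=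
  ⟨fun i => ⟨α i, Nat.lt_succ_of_le
      ((hα.monotoneOn (Fin.is_le i) (Set.mem_Iic.2 le_rfl) (Fin.is_le i)).trans hm)⟩,
    fun i j hij => hα (Fin.is_le i) (Fin.is_le j) hij, fun _ => rfl⟩

theorem orderedSubPair_of_strictMono {r c : ℕ → ℕ} {m n q : ℕ} {f : Fin (q + 1) → Fin (m + 1)}
    {g : Fin (q + 1) → Fin (n + 1)} (hf : StrictMono f) (hg : StrictMono g)
    (hfg : ∀ i, r (f i) ≤ c (g i)) :
    OrderedSubPair r c m n q (fun i => f (Fin.clamp i q)) (fun i => g (Fin.clamp i q)) := by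
  have hclamp : StrictMonoOn (Fin.clamp · q) (Set.Iic q) := fun i hi j hj hij => by
    simp only [Fin.lt_def, Fin.coe_clamp]
    simp only [Set.mem_Iic] at hi hj
    omega
  exact ⟨fun i hi j hj hij => hf (hclamp hi hj hij), fun i hi j hj hij => hg (hclamp hi hj hij),
    Fin.is_le _, Fin.is_le _, fun i _ => hfg _⟩

theorem pascalSub_eq_binomMatrix (r c : ℕ → ℕ) (m n : ℕ) :
    pascalSub r c m n = binomMatrix (r ∘ Fin.val) (c ∘ Fin.val) :=
  rfl

theorem rank_pascalSub_le_of_maximal {r c : ℕ → ℕ} {m n p : ℕ} (hr : StrictMono r)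
    (hc : StrictMono c) (hmax : ∀ q α β, OrderedSubPair r c m n q α β → q ≤ p) :
    (pascalSub r c m n).rank ≤ p + 1 := by
  by_contra! hlt
  obtain ⟨f, g, hf, hg, hdet⟩ := Matrix.exists_det_submatrix_ne_zero _ (Nat.succ_le_of_lt hlt)
  rw [pascalSub_eq_binomMatrix, binomMatrix_submatrix] at hdet
  have hstair : ∀ i, r (f i) ≤ c (g i) := fun i => by
    by_contra! hgt
    exact hdet (det_binomMatrix_eq_zero_of_lt ((hr.comp Fin.val_strictMono).comp hf).monotone
      ((hc.comp Fin.val_strictMono).comp hg).monotone hgt)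
  have := hmax _ _ _ (orderedSubPair_of_strictMono hf hg hstair)
  omega

end OrderedSubPair

open Classical in
/-- Let `{r ∘ α, c ∘ β}` be an ordered sub-pair of length `p + 1` for
`{[r 0, …, r m], [c 0, …, c n]}`, and let `I` be the `(m+1) × (n+1)` matrix
with entry `1` at the positions `(α i, β i)` for `i = 0, …, p` and `0`
elsewhere.  Then `rank I = p + 1 = rank T_{r̂,ĉ}`; moreover, if the sub-pair is
maximal then `rank T_{r,c} = rank I`. -/
theorem pascal_rank_eq_rank_indexMatrix
    (m n p : ℕ) (r c α β : ℕ → ℕ) (hr : StrictMono r) (hc : StrictMono c)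
    (hsub : OrderedSubPair r c m n p α β)
    (I : Matrix (Fin (m + 1)) (Fin (n + 1)) ℚ)
    (hI : ∀ a b, I a b =
      if ∃ i ≤ p, α i = (a : ℕ) ∧ β i = (b : ℕ) then 1 else 0) :
    I.rank = p + 1 ∧
    (Matrix.of fun i j : Fin (p + 1) =>
        ((c (β (j : ℕ))).choose (r (α (i : ℕ))) : ℚ)).rank = p + 1 ∧
    ((∀ (q : ℕ) (α' β' : ℕ → ℕ), OrderedSubPair r c m n q α' β' → q ≤ p) →
      (pascalSub r c m n).rank = I.rank) := by
  obtain ⟨hα, hβ, hαm, hβn, hstair⟩ := hsub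
  obtain ⟨f, hf, hfα⟩ := hα.exists_fin hαm
  obtain ⟨g, hg, hgβ⟩ := hβ.exists_fin hβn
  have hT : (Matrix.of fun i j : Fin (p + 1) => ((c (β (j : ℕ))).choose (r (α (i : ℕ))) : ℚ)) =
      (pascalSub r c m n).submatrix f g := by
    ext i j
    simp [pascalSub, hfα, hgβ]
  have hTrank : ((pascalSub r c m n).submatrix f g).rank = p + 1 := by
    rw [pascalSub_eq_binomMatrix, binomMatrix_submatrix, Matrix.rank_of_det_ne_zero
      (det_binomMatrix_pos ((hr.comp Fin.val_strictMono).comp hf)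
        ((hc.comp Fin.val_strictMono).comp hg) fun i => ?_).ne', Fintype.card_fin]
    simpa [hfα, hgβ] using hstair i i.is_le
  have hIrank : I.rank = p + 1 := by
    refine (Matrix.rank_eq_card_of_eq_ite_exists hf.injective hg.injective I fun a b => ?_).trans
      (Fintype.card_fin _)
    rw [hI]
    congr 1
    simp [Fin.ext_iff, hfα, hgβ, Fin.exists_iff, and_left_comm]
  refine ⟨hIrank, hT ▸ hTrank, fun hmax => hIrank ▸ le_antisymm
    (rank_pascalSub_le_of_maximal hr hc hmax) (hTrank ▸ Matrix.rank_submatrix_le _ _ _)⟩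
end
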